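/- Let P and Q be posets on [n] with P ≤ Q (i.e., i ⪯_P j implies i ⪯_Q j). Then O_Q(C) ≤ O_P(C) for every [n,k]_q linear code C ⊆ F_q^n. -/

import Mathlib

/-- `I` is an ideal of the poset `P` on `[n]`. -/
def IsPosetIdeal {n : ℕ} (P : PartialOrder (Fin n)) (I : Set (Fin n)) : Prop :=
  ∀ i ∈ I, ∀ j, P.le j i → j ∈ I

/-- The smallest ideal of `P` containing `X`. -/
def idealGen {n : ℕ} (P : PartialOrder (Fin n)) (X : Set (Fin n)) : Set (Fin n) :=
  ⋂₀ {I | IsPosetIdeal P I ∧ X ⊆ I}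

/-- The `P`-weight `ω_P(x) = |⟨supp(x)⟩|`. -/
noncomputable def posetWeight {F : Type*} [Field F] {n : ℕ} (P : PartialOrder (Fin n))
    (x : Fin n → F) : ℕ :=
  (idealGen P {i | x i ≠ 0}).ncard

/-- The `P`-distance `d_P(x,y) = ω_P(x - y)`. -/
noncomputable def posetDist {F : Type*} [Field F] {n : ℕ} (P : PartialOrder (Fin n))
    (x y : Fin n → F) : ℕ :=
  posetWeight P (x - y)

/-- A linear `P`-isometry of `F_q^n`. -/
def IsPIsometry {F : Type*} [Field F] {n : ℕ} (P : PartialOrder (Fin n))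
    (T : (Fin n → F) ≃ₗ[F] (Fin n → F)) : Prop :=
  ∀ x y, posetDist P (T x) (T y) = posetDist P x y

/-- The support of a subspace `D ⊆ F_q^n`. -/
def suppS {F : Type*} [Field F] {n : ℕ} (D : Submodule F (Fin n → F)) : Set (Fin n) :=
  {j | ∃ x ∈ D, x j ≠ 0}

/-- `C_0`: the subspace of all vectors vanishing on the support of `C`. -/
def coSupp {F : Type*} [Field F] {n : ℕ} (C : Submodule F (Fin n → F)) :
    Submodule F (Fin n → F) where
  carrier := {x | ∀ j ∈ suppS C, x j = 0}
  add_mem' := by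
    intro a b ha hb j hj
    simp only [Set.mem_setOf_eq] at ha hb ⊢
    rw [Pi.add_apply, ha j hj, hb j hj, add_zero]
  zero_mem' := by intro j _; rfl
  smul_mem' := by
    intro c a ha j hj
    simp only [Set.mem_setOf_eq] at ha ⊢
    rw [Pi.smul_apply, ha j hj, smul_zero]

/-- A decomposition `(C; C_0; C_1, …, C_r)` of a linear code `C ⊆ F_q^n`:
nonzero subspaces `C_1, …, C_r` with pairwise disjoint supports whose internal
direct sum is `C`.  (The distinguished part `C_0 = coSupp C` is determined by `C`.) -/
structure Decomposition {F : Type*} [Field F] {n : ℕ} (C : Submodule F (Fin n → F)) where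
  r : ℕ
  D : Fin r → Submodule F (Fin n → F)
  ne_bot : ∀ i, D i ≠ ⊥
  indep : iSupIndep D
  sup_eq : ⨆ i, D i = C
  disj : Pairwise fun i j => Disjoint (suppS (D i)) (suppS (D j))

/-- A `P`-decomposition of `C`: a decomposition of a code `C'` that is
`P`-equivalent to `C`. -/
structure PDecomposition {F : Type*} [Field F] {n : ℕ} (P : PartialOrder (Fin n))
    (C : Submodule F (Fin n → F)) where
  C' : Submodule F (Fin n → F)
  T : (Fin n → F) ≃ₗ[F] (Fin n → F)
  isom : IsPIsometry P T
  image : Submodule.map (T : (Fin n → F) →ₗ[F] (Fin n → F)) C = C'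
  dec : Decomposition C'

/-- A trivial `P`-decomposition of `C`: a single component, with
`|supp(C')| = |supp(C)|` and `|supp(C'_0)| = |supp(C_0)|`. -/
def PDecomposition.IsTrivial {F : Type*} [Field F] {n : ℕ} {P : PartialOrder (Fin n)}
    {C : Submodule F (Fin n → F)} (d : PDecomposition P C) : Prop :=
  d.dec.r = 1 ∧ (suppS d.C').ncard = (suppS C).ncard ∧
    (suppS (coSupp d.C')).ncard = (suppS (coSupp C)).ncard

/-- A code is `P`-irreducible if it admits no non-trivial `P`-decomposition. -/
def PIrreducible {F : Type*} [Field F] {n : ℕ} (P : PartialOrder (Fin n))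
    (C : Submodule F (Fin n → F)) : Prop :=
  ∀ d : PDecomposition P C, d.IsTrivial

/-- A `P`-decomposition is maximal if each of its components is `P`-irreducible. -/
def PDecomposition.IsMaximal {F : Type*} [Field F] {n : ℕ} {P : PartialOrder (Fin n)}
    {C : Submodule F (Fin n → F)} (d : PDecomposition P C) : Prop :=
  ∀ i, PIrreducible P (d.dec.D i)

/-- The complexity of a `P`-decomposition: `Σ_{i=1}^r q^{n_i - k_i}` where
`n_i = |supp(C'_i)|` and `k_i = dim C'_i`. -/
noncomputable def PDecomposition.complexity {F : Type*} [Field F] [Fintype F] {n : ℕ}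
    {P : PartialOrder (Fin n)} {C : Submodule F (Fin n → F)}
    (d : PDecomposition P C) : ℕ :=
  ∑ i, (Fintype.card F) ^ ((suppS (d.dec.D i)).ncard - Module.finrank F (d.dec.D i))

/-- A `P`-decomposition of `C` is primary if its complexity is minimal among all
`P`-decompositions of `C`. -/
def PDecomposition.IsPrimary {F : Type*} [Field F] [Fintype F] {n : ℕ}
    {P : PartialOrder (Fin n)} {C : Submodule F (Fin n → F)}
    (d : PDecomposition P C) : Prop :=
  ∀ d' : PDecomposition P C, d.complexity ≤ d'.complexity

/-- `O_P(C)`: the minimal complexity among all `P`-decompositions of `C`. -/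
noncomputable def minComplexity {F : Type*} [Field F] [Fintype F] {n : ℕ}
    (P : PartialOrder (Fin n)) (C : Submodule F (Fin n → F)) : ℕ :=
  sInf {m | ∃ d : PDecomposition P C, d.complexity = m}

/-!
A linear `P`-isometry `T` maps each coordinate subspace `V_I = {x | supp x ⊆ I}`, `I` a
`P`-ideal, onto `V_J` for another `P`-ideal `J`: removing a maximal element `u` of `I`, by
induction `T (V_I) = V_J' + F ∙ T eᵤ`, and a vector of this space whose support contains `J'` and
`supp (T eᵤ)` has weight at most `|I| = dim T (V_I)`, so the ideal it generates is the wanted `J`.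
Principal ideals go to principal ideals, `T (V_⟨u⟩) = V_⟨s u⟩` for an automorphism `s` of `P`,
and after permuting coordinates by `s` the map `T` fixes every `V_I`. Since `P ≤ Q`, every
`Q`-ideal is a `P`-ideal, so the permuted map is a `Q`-isometry; coordinate permutations preserve
decompositions and their complexities.
-/

section

variable {F : Type*} [Field F] {n : ℕ}

section Ideals

variable {P : PartialOrder (Fin n)} {I X : Set (Fin n)} {u j : Fin n}

theorem mem_idealGen : j ∈ idealGen P X ↔ ∃ i ∈ X, P.le j i := by
  refine ⟨fun h => Set.mem_sInter.1 h {j | ∃ i ∈ X, P.le j i} ⟨?_, ?_⟩, ?_⟩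
  · rintro a ⟨i, hi, hai⟩ b hba
    exact ⟨i, hi, P.le_trans _ _ _ hba hai⟩
  · exact fun i hi => ⟨i, hi, P.le_refl i⟩
  · rintro ⟨i, hi, hji⟩
    exact Set.mem_sInter.2 fun I hI => hI.1 i (hI.2 hi) j hji

theorem isPosetIdeal_idealGen (P : PartialOrder (Fin n)) (X : Set (Fin n)) :
    IsPosetIdeal P (idealGen P X) := by
  intro i hi j hji
  obtain ⟨k, hk, hik⟩ := mem_idealGen.1 hi
  exact mem_idealGen.2 ⟨k, hk, P.le_trans _ _ _ hji hik⟩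

theorem subset_idealGen (P : PartialOrder (Fin n)) (X : Set (Fin n)) : X ⊆ idealGen P X :=
  fun i hi => mem_idealGen.2 ⟨i, hi, P.le_refl i⟩

theorem idealGen_subset (hI : IsPosetIdeal P I) (hX : X ⊆ I) : idealGen P X ⊆ I :=
  Set.sInter_subset_of_mem ⟨hI, hX⟩

theorem mem_idealGen_singleton : j ∈ idealGen P {u} ↔ P.le j u := by
  simp [mem_idealGen]

theorem idealGen_singleton_subset_iff {v : Fin n} :
    idealGen P {u} ⊆ idealGen P {v} ↔ P.le u v :=
  ⟨fun h => mem_idealGen_singleton.1 (h (subset_idealGen P {u} rfl)),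
    fun h => idealGen_subset (isPosetIdeal_idealGen P {v})
      (Set.singleton_subset_iff.2 (mem_idealGen_singleton.2 h))⟩

theorem IsPosetIdeal.of_le {Q : PartialOrder (Fin n)} (hPQ : ∀ i j, P.le i j → Q.le i j)
    (hI : IsPosetIdeal Q I) : IsPosetIdeal P I :=
  fun i hi j hji => hI i hi j (hPQ j i hji)

theorem IsPosetIdeal.exists_isPosetIdeal_diff_singleton (hI : IsPosetIdeal P I)
    (hne : I.Nonempty) : ∃ u ∈ I, IsPosetIdeal P (I \ {u}) := by
  obtain ⟨u, hu, hmax⟩ :=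
    @Set.Finite.exists_maximal _ P.toLE ⟨P.le_trans⟩ I I.toFinite hne
  refine ⟨u, hu, fun i hi j hji => ⟨hI i hi.1 j hji, ?_⟩⟩
  rintro rfl
  exact hi.2 (P.le_antisymm _ _ (hmax hi.1 hji) hji)

end Ideals

section CoordSubspace

variable {I J : Set (Fin n)} {x : Fin n → F}

variable (F) in
def coordSubspace (I : Set (Fin n)) : Submodule F (Fin n → F) where
  carrier := {x | ∀ j ∉ I, x j = 0}
  add_mem' ha hb j hj := by rw [Pi.add_apply, ha j hj, hb j hj, add_zero]
  zero_mem' _ _ := rfl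
  smul_mem' c _ ha j hj := by rw [Pi.smul_apply, ha j hj, smul_zero]

theorem mem_coordSubspace : x ∈ coordSubspace F I ↔ {j | x j ≠ 0} ⊆ I :=
  forall_congr' fun _ => not_imp_comm

theorem single_mem_coordSubspace {i : Fin n} (hi : i ∈ I) (c : F) :
    Pi.single i c ∈ coordSubspace F I := fun j hj => by
  rw [Pi.single_eq_of_ne (ne_of_mem_of_not_mem hi hj).symm]

theorem coordSubspace_le_coordSubspace_iff :
    coordSubspace F I ≤ coordSubspace F J ↔ I ⊆ J := by
  refine ⟨fun h i hi => ?_, fun h x hx =>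
    mem_coordSubspace.2 ((mem_coordSubspace.1 hx).trans h)⟩
  by_contra hiJ
  simpa using h (single_mem_coordSubspace hi (1 : F)) i hiJ

theorem coordSubspace_injective : Function.Injective (coordSubspace F : Set (Fin n) → _) :=
  fun _ _ h => (coordSubspace_le_coordSubspace_iff.1 h.le).antisymm
    (coordSubspace_le_coordSubspace_iff.1 h.ge)

theorem coordSubspace_union :
    coordSubspace F (I ∪ J) = coordSubspace F I ⊔ coordSubspace F J := by
  classical
  refine le_antisymm (fun x hx => ?_) (sup_le
    (coordSubspace_le_coordSubspace_iff.2 Set.subset_union_left)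
    (coordSubspace_le_coordSubspace_iff.2 Set.subset_union_right))
  rw [← Set.indicator_self_add_compl I x]
  refine Submodule.add_mem_sup (fun j hj => Set.indicator_of_notMem hj x) fun j hj => ?_
  by_cases hjI : j ∈ I
  · exact Set.indicator_of_notMem (Set.notMem_compl_iff.2 hjI) x
  · exact (Set.indicator_of_mem hjI x).trans (hx j (by simp [hjI, hj]))

theorem coordSubspace_singleton (u : Fin n) :
    coordSubspace F {u} = Submodule.span F {Pi.single u 1} := by
  refine le_antisymm (fun x hx => Submodule.mem_span_singleton.2 ⟨x u, ?_⟩) ?_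
  · ext j
    by_cases hj : j = u
    · subst hj; simp
    · simp [Pi.single_eq_of_ne hj, hx j hj]
  · exact Submodule.span_le.2
      (Set.singleton_subset_iff.2 (single_mem_coordSubspace (Set.mem_singleton u) 1))

theorem finrank_coordSubspace (I : Set (Fin n)) :
    Module.finrank F (coordSubspace F I) = I.ncard := by
  classical
  have h : coordSubspace F I = ⨅ i ∈ Iᶜ, LinearMap.ker (LinearMap.proj i) := by
    ext x; simp [coordSubspace]
  rw [h, (LinearMap.iInfKerProjEquiv F (fun _ => F) disjoint_compl_right
    (by simp)).finrank_eq, Module.finrank_fintype_fun_eq_card, ← Nat.card_eq_fintype_card,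
    Nat.card_coe_set_eq]

theorem map_funCongrLeft_coordSubspace (e : Equiv.Perm (Fin n)) (I : Set (Fin n)) :
    (coordSubspace F I).map (LinearEquiv.funCongrLeft F F e).toLinearMap
      = coordSubspace F (e ⁻¹' I) := by
  ext x
  refine (Submodule.mem_map_equiv _).trans
    ⟨fun hx j hj => by simpa using hx (e j) hj, fun hx j hj => hx _ (by simpa using hj)⟩

end CoordSubspace

section Isometry

variable {P Q : PartialOrder (Fin n)} {T : (Fin n → F) ≃ₗ[F] (Fin n → F)} {I J : Set (Fin n)}

theorem posetWeight_le_ncard (hI : IsPosetIdeal P I) {x : Fin n → F}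
    (hx : x ∈ coordSubspace F I) : posetWeight P x ≤ I.ncard :=
  Set.ncard_le_ncard (idealGen_subset hI (mem_coordSubspace.1 hx))

theorem IsPIsometry.posetWeight_apply (hT : IsPIsometry P T) (x : Fin n → F) :
    posetWeight P (T x) = posetWeight P x := by
  simpa [posetDist] using hT x 0

theorem IsPIsometry.symm (hT : IsPIsometry P T) : IsPIsometry P T.symm := fun x y => by
  simpa using (hT (T.symm x) (T.symm y)).symm

theorem exists_sup_span_eq_coordSubspace {y : Fin n → F}
    (hw : ∀ w ∈ coordSubspace F J ⊔ Submodule.span F {y},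
      posetWeight P w ≤ Module.finrank F ↥(coordSubspace F J ⊔ Submodule.span F {y})) :
    ∃ K, IsPosetIdeal P K ∧ coordSubspace F J ⊔ Submodule.span F {y} = coordSubspace F K := by
  classical
  set w := y + (J ∩ {j | y j = 0}).indicator 1
  have hsupp : J ∪ {j | y j ≠ 0} ⊆ {j | w j ≠ 0} := by
    rintro j (hj | hj) <;> by_cases hyj : y j = 0 <;> simp_all [w]
  have hwW : w ∈ coordSubspace F J ⊔ Submodule.span F {y} :=
    Submodule.add_mem _ (Submodule.mem_sup_right (Submodule.mem_span_singleton_self y))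
      (Submodule.mem_sup_left
        (mem_coordSubspace.2 fun j hj => (Set.mem_of_indicator_ne_zero hj).1))
  set K := idealGen P {j | w j ≠ 0}
  have hle : coordSubspace F J ⊔ Submodule.span F {y} ≤ coordSubspace F K := by
    have hsub : J ∪ {j | y j ≠ 0} ⊆ K := hsupp.trans (subset_idealGen P _)
    refine sup_le (coordSubspace_le_coordSubspace_iff.2 (Set.subset_union_left.trans hsub)) ?_
    exact Submodule.span_le.2 (Set.singleton_subset_iff.2
      (mem_coordSubspace.2 (Set.subset_union_right.trans hsub)))
  refine ⟨K, isPosetIdeal_idealGen P _, Submodule.eq_of_le_of_finrank_le hle ?_⟩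
  rw [finrank_coordSubspace]
  exact hw w hwW

theorem IsPIsometry.exists_map_coordSubspace_eq (hT : IsPIsometry P T) (hI : IsPosetIdeal P I) :
    ∃ J, IsPosetIdeal P J ∧ (coordSubspace F I).map T.toLinearMap = coordSubspace F J := by
  induction hm : I.ncard generalizing I with
  | zero =>
    obtain rfl : I = ∅ := (Set.ncard_eq_zero I.toFinite).1 hm
    have hbot : coordSubspace F (∅ : Set (Fin n)) = ⊥ :=
      Submodule.finrank_eq_zero.1 (by simp [finrank_coordSubspace])
    exact ⟨∅, fun i hi => hi.elim, by rw [hbot, Submodule.map_bot]⟩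
  | succ m ih =>
    obtain ⟨u, hu, hIu⟩ :=
      hI.exists_isPosetIdeal_diff_singleton (Set.nonempty_of_ncard_ne_zero (by omega))
    obtain ⟨J, -, hJ⟩ := ih hIu (by rw [Set.ncard_sdiff_singleton_of_mem hu, hm]; rfl)
    have hsplit : (coordSubspace F I).map T.toLinearMap
        = coordSubspace F J ⊔ Submodule.span F {T (Pi.single u 1)} := by
      rw [← Set.sdiff_union_of_subset (Set.singleton_subset_iff.2 hu), coordSubspace_union,
        coordSubspace_singleton, Submodule.map_sup, hJ, Submodule.map_span, Set.image_singleton]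
      rfl
    rw [hsplit]
    refine exists_sup_span_eq_coordSubspace fun w hw => ?_
    rw [← hsplit] at hw ⊢
    obtain ⟨x, hx, rfl⟩ := hw
    rw [LinearEquiv.coe_coe, hT.posetWeight_apply, LinearEquiv.finrank_map_eq,
      finrank_coordSubspace]
    exact posetWeight_le_ncard hI hx

/-- Through `T` and `T⁻¹`, ideals `I` and `J` with `T (V_I) = V_J` correspond bijectively,
preserving inclusions and unions; and a principal ideal is not the union of two proper subideals. -/
theorem IsPIsometry.exists_map_coordSubspace_idealGen_singleton (hT : IsPIsometry P T)
    (u : Fin n) : ∃ b, (coordSubspace F (idealGen P {u})).map T.toLinearMap =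
      coordSubspace F (idealGen P {b}) := by
  have hu : u ∈ idealGen P {u} := subset_idealGen P {u} rfl
  obtain ⟨J, hJ, hTJ⟩ := hT.exists_map_coordSubspace_eq (isPosetIdeal_idealGen P {u})
  have hJne : J.Nonempty := by
    have := congrArg (fun W : Submodule F (Fin n → F) => Module.finrank F W) hTJ
    rw [LinearEquiv.finrank_map_eq, finrank_coordSubspace, finrank_coordSubspace] at this
    exact Set.nonempty_of_ncard_ne_zero
      (this ▸ ((Set.ncard_pos (Set.toFinite _)).2 ⟨u, hu⟩).ne')
  obtain ⟨b, hb, hJb⟩ := hJ.exists_isPosetIdeal_diff_singleton hJne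
  have hbJ : idealGen P {b} ⊆ J := idealGen_subset hJ (Set.singleton_subset_iff.2 hb)
  have key : ∀ X Y, IsPosetIdeal P X → u ∈ X →
      (coordSubspace F Y).map T.symm.toLinearMap = coordSubspace F X → J ⊆ Y := by
    intro X Y hX huX hXY
    rw [← coordSubspace_le_coordSubspace_iff (F := F), ← hTJ, Submodule.map_le_iff_le_comap,
      Submodule.comap_equiv_eq_map_symm, hXY, coordSubspace_le_coordSubspace_iff]
    exact idealGen_subset hX (Set.singleton_subset_iff.2 huX)
  obtain ⟨A, hA, hTA⟩ := hT.symm.exists_map_coordSubspace_eq (isPosetIdeal_idealGen P {b})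
  obtain ⟨B, hB, hTB⟩ := hT.symm.exists_map_coordSubspace_eq hJb
  have hAB : idealGen P {u} = A ∪ B := by
    apply coordSubspace_injective (F := F)
    rw [coordSubspace_union, ← hTA, ← hTB, ← Submodule.map_sup, ← coordSubspace_union,
      Set.union_sdiff_cancel' (Set.singleton_subset_iff.2 (subset_idealGen P {b} rfl)) hbJ]
    exact ((Submodule.map_symm_eq_iff T).2 hTJ).symm
  rcases hAB ▸ hu with huA | huB
  · exact ⟨b, by rw [hTJ, (key A _ hA huA hTA).antisymm hbJ]⟩
  · exact ((key B _ hB huB hTB hb).2 rfl).elim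

theorem map_coordSubspace_le_of_forall_idealGen_singleton (f : (Fin n → F) →ₗ[F] (Fin n → F))
    (hf : ∀ u, (coordSubspace F (idealGen P {u})).map f ≤ coordSubspace F (idealGen P {u}))
    (hI : IsPosetIdeal P I) : (coordSubspace F I).map f ≤ coordSubspace F I := by
  rintro _ ⟨x, hx, rfl⟩
  rw [← Finset.univ_sum_single x, map_sum]
  refine Submodule.sum_mem _ fun i _ => ?_
  by_cases hi : i ∈ I
  · exact coordSubspace_le_coordSubspace_iff.2
      (idealGen_subset hI (Set.singleton_subset_iff.2 hi))
      (hf i ⟨_, single_mem_coordSubspace (subset_idealGen P {i} rfl) _, rfl⟩)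
  · rw [hx i hi, Pi.single_zero, map_zero]
    exact zero_mem _

theorem isPIsometry_of_forall_map_coordSubspace_eq
    (hT : ∀ I, IsPosetIdeal P I → (coordSubspace F I).map T.toLinearMap = coordSubspace F I) :
    IsPIsometry P T := by
  have hgen : ∀ x, idealGen P {j | T x j ≠ 0} = idealGen P {j | x j ≠ 0} := by
    intro x
    refine congrArg Set.sInter (Set.ext fun I => and_congr_right fun hI => ?_)
    rw [← mem_coordSubspace (F := F), ← mem_coordSubspace (F := F)]
    conv_lhs => rw [← hT I hI]
    rw [Submodule.mem_map_equiv, LinearEquiv.symm_apply_apply]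
  intro x y
  rw [posetDist, posetDist, posetWeight, posetWeight, ← map_sub, hgen]

theorem IsPIsometry.exists_perm_isPIsometry (hPQ : ∀ i j, P.le i j → Q.le i j)
    (hT : IsPIsometry P T) :
    ∃ e : Equiv.Perm (Fin n), IsPIsometry Q (T.trans (LinearEquiv.funCongrLeft F F e)) := by
  choose s hs using hT.exists_map_coordSubspace_idealGen_singleton
  have hs_le : ∀ u v, P.le (s u) (s v) ↔ P.le u v := by
    intro u v
    rw [← idealGen_singleton_subset_iff (P := P), ← idealGen_singleton_subset_iff (P := P),
      ← coordSubspace_le_coordSubspace_iff (F := F),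
      ← coordSubspace_le_coordSubspace_iff (F := F), ← hs, ← hs,
      Submodule.map_le_map_iff_of_injective T.injective]
  have hs_inj : Function.Injective s := fun u v h =>
    P.le_antisymm _ _ ((hs_le u v).1 (h ▸ P.le_refl _)) ((hs_le v u).1 (h ▸ P.le_refl _))
  set e := Equiv.ofBijective s (Finite.injective_iff_bijective.1 hs_inj)
  have hfix : ∀ u, (coordSubspace F (idealGen P {u})).map
      (T.trans (LinearEquiv.funCongrLeft F F e)).toLinearMap =
        coordSubspace F (idealGen P {u}) := by
    intro u
    rw [LinearEquiv.coe_trans, Submodule.map_comp, hs, map_funCongrLeft_coordSubspace]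
    congr 1
    ext j
    simp [e, mem_idealGen_singleton, hs_le]
  refine ⟨e, isPIsometry_of_forall_map_coordSubspace_eq fun I hI => ?_⟩
  exact Submodule.eq_of_le_of_finrank_eq
    (map_coordSubspace_le_of_forall_idealGen_singleton _ (fun u => (hfix u).le) (hI.of_le hPQ))
    (LinearEquiv.finrank_map_eq _ _)

end Isometry

section Decomposition

variable {P Q : PartialOrder (Fin n)} {C : Submodule F (Fin n → F)}

theorem suppS_map_funCongrLeft (e : Equiv.Perm (Fin n)) (D : Submodule F (Fin n → F)) :
    suppS (D.map (LinearEquiv.funCongrLeft F F e).toLinearMap) = e ⁻¹' suppS D := by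
  ext j
  constructor
  · rintro ⟨_, ⟨y, hy, rfl⟩, hyj⟩
    exact ⟨y, hy, hyj⟩
  · rintro ⟨y, hy, hyj⟩
    exact ⟨_, ⟨y, hy, rfl⟩, hyj⟩

def Decomposition.mapPerm (d : Decomposition C) (e : Equiv.Perm (Fin n)) :
    Decomposition (C.map (LinearEquiv.funCongrLeft F F e).toLinearMap) where
  r := d.r
  D i := (d.D i).map (LinearEquiv.funCongrLeft F F e).toLinearMap
  ne_bot i := Submodule.map_ne_bot_iff.2 (d.ne_bot i)
  indep := (iSupIndep_map_orderIso_iff (Submodule.orderIsoMapComap _)).2 d.indep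
  sup_eq := by rw [← Submodule.map_iSup, d.sup_eq]
  disj i j hij := by
    dsimp only
    rw [suppS_map_funCongrLeft, suppS_map_funCongrLeft]
    exact (d.disj hij).preimage e

theorem Decomposition.nonempty (C : Submodule F (Fin n → F)) : Nonempty (Decomposition C) := by
  by_cases hC : C = ⊥
  · exact ⟨⟨0, Fin.elim0, fun i => i.elim0, iSupIndep_subsingleton _, by simp [hC],
      fun i => i.elim0⟩⟩
  · exact ⟨⟨1, fun _ => C, fun _ => hC, iSupIndep_subsingleton _, iSup_const,
      Subsingleton.pairwise⟩⟩

theorem PDecomposition.nonempty (P : PartialOrder (Fin n)) (C : Submodule F (Fin n → F)) :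
    Nonempty (PDecomposition P C) :=
  let ⟨d⟩ := Decomposition.nonempty C
  ⟨⟨C, LinearEquiv.refl F _, fun _ _ => rfl, Submodule.map_id C, d⟩⟩

theorem PDecomposition.exists_complexity_eq [Fintype F] (hPQ : ∀ i j, P.le i j → Q.le i j)
    (d : PDecomposition P C) : ∃ d' : PDecomposition Q C, d'.complexity = d.complexity := by
  obtain ⟨e, he⟩ := d.isom.exists_perm_isPIsometry hPQ
  refine ⟨⟨_, _, he, by rw [LinearEquiv.coe_trans, Submodule.map_comp, d.image], d.dec.mapPerm e⟩,
    Finset.sum_congr rfl fun (i : Fin d.dec.r) _ => ?_⟩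
  change _ ^ ((suppS ((d.dec.D i).map _)).ncard - Module.finrank F ((d.dec.D i).map
    (LinearEquiv.funCongrLeft F F e).toLinearMap)) = _
  rw [suppS_map_funCongrLeft, LinearEquiv.finrank_map_eq,
    Set.ncard_preimage_of_injective_subset_range e.injective (by simp)]

end Decomposition

end

/-- **Corollary.** If `P ≤ Q` (every `P`-relation is a `Q`-relation),
then `O_Q(C) ≤ O_P(C)` for every `[n,k]_q` linear code `C ⊆ F_q^n`. -/
theorem minComplexity_antitone {F : Type*} [Field F] [Fintype F] {n : ℕ}
    (P Q : PartialOrder (Fin n)) (hPQ : ∀ i j : Fin n, P.le i j → Q.le i j)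
    (C : Submodule F (Fin n → F)) :
    minComplexity Q C ≤ minComplexity P C := by
  obtain ⟨d₀⟩ := PDecomposition.nonempty P C
  have hne : {m | ∃ d : PDecomposition P C, d.complexity = m}.Nonempty := ⟨_, d₀, rfl⟩
  obtain ⟨d, hd⟩ := Nat.sInf_mem hne
  obtain ⟨d', hd'⟩ := d.exists_complexity_eq hPQ
  calc minComplexity Q C ≤ d'.complexity := Nat.sInf_le ⟨d', rfl⟩
    _ = d.complexity := hd'
    _ = minComplexity P C := hd
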